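/- (Proposition 3.3, convergence) The sequence (a(k))_{k≥0} converges, i.e. there exists a real number a with a(k) → a as k → ∞. -/

import Mathlib

/-- `pq n = (p n, q n)` where `p n` (resp. `q n`) is the probability that the
exploitative player X, always guessing `2` or `n-1`, wins the misère search game
`MS(P_n)` against the uniformly random player R when playing first (resp. second):
`p 0 = p 1 = 0`, `q 0 = 0`,
`q n = (1/n) * ∑_{i=1}^{n} ((i-1)·p(i-1) + (n-i)·p(n-i) + 1)/n` for `n ≥ 1`, and
`p n = 1/n + ((n-2)/n) * q (n-2)` for `n ≥ 2`. -/
noncomputable def pq : ℕ → ℝ × ℝ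
  | 0 => (0, 0)
  | 1 =>
    (0,
      (1 / ((1 : ℕ) : ℝ)) * ∑ i ∈ (Finset.Icc 1 1).attach,
        (((i.1 - 1 : ℕ) : ℝ) * (pq (i.1 - 1)).1 +
          ((1 - i.1 : ℕ) : ℝ) * (pq (1 - i.1)).1 + 1) / ((1 : ℕ) : ℝ))
  | n + 2 =>
    (1 / ((n : ℝ) + 2) + ((n : ℝ) / ((n : ℝ) + 2)) * (pq n).2,
      (1 / ((n : ℝ) + 2)) * ∑ i ∈ (Finset.Icc 1 (n + 2)).attach,
        (((i.1 - 1 : ℕ) : ℝ) * (pq (i.1 - 1)).1 +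
          ((n + 2 - i.1 : ℕ) : ℝ) * (pq (n + 2 - i.1)).1 + 1) / ((n : ℝ) + 2))
  decreasing_by
  · have hm := i.2; simp only [Finset.mem_Icc] at hm; omega
  · have hm := i.2; simp only [Finset.mem_Icc] at hm; omega
  · omega
  · have hm := i.2; simp only [Finset.mem_Icc] at hm; omega
  · have hm := i.2; simp only [Finset.mem_Icc] at hm; omega

/-- X's winning probability in `MS(P_n)` playing first. -/
noncomputable def p (n : ℕ) : ℝ := (pq n).1

/-- X's winning probability in `MS(P_n)` playing second. -/
noncomputable def q (n : ℕ) : ℝ := (pq n).2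

/-- `s n = ∑_{i=1}^{n} i * p i`. -/
noncomputable def s (n : ℕ) : ℝ := ∑ i ∈ Finset.Icc 1 n, (i : ℝ) * p i

/-- `a k = (s k + 2(k+1)) / (k² + 7k + 6)`. -/
noncomputable def a (k : ℕ) : ℝ :=
  (s k + 2 * ((k : ℝ) + 1)) / ((k : ℝ) ^ 2 + 7 * (k : ℝ) + 6)

/-- `b k` is the maximum absolute difference between any two of `a k, a (k+1), a (k+2)`. -/
noncomputable def b (k : ℕ) : ℝ :=
  max |a k - a (k + 1)| (max |a (k + 1) - a (k + 2)| |a k - a (k + 2)|)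

/-!
Reflecting the sum that defines `q` gives `q (n + 1) = (2 s n + n + 1) / (n + 1)²`, and with
`p (n + 2) = (1 + n q n) / (n + 2)` this turns into a three-term recurrence for `s`. In terms of
`a` it reads `a (n + 3) = ((n + 3)(n + 8) a (n + 2) + 2(n + 6) a n) / ((n + 4)(n + 9))`, a convex
combination since the weights add up to the denominator. Hence
`|a (n + 3) - a (n + 2)| ≤ |a n - a (n + 2)| / 3`, so the distances between consecutive terms
satisfy `d (n + 2) ≤ (d n + d (n + 1)) / 3`, which forces geometric decay; `a` is Cauchy.
-/

open Finset

theorem summable_of_le_mul_add {d : ℕ → ℝ} {θ : ℝ} (hd : ∀ n, 0 ≤ d n) (hθ : θ < 1 / 2)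
    (h : ∀ n, d (n + 2) ≤ θ * (d n + d (n + 1))) : Summable d := by
  -- `E n = d (n + 1) + d n / 2` contracts by the factor `θ + 1 / 2 < 1`.
  set E : ℕ → ℝ := fun n ↦ d (n + 1) + d n / 2 with hE
  have hE_nonneg (n : ℕ) : 0 ≤ E n := by simp only [hE]; linarith [hd n, hd (n + 1)]
  have hE_contract (n : ℕ) : ‖E (n + 1)‖ ≤ (θ + 1 / 2) * ‖E n‖ := by
    rw [Real.norm_of_nonneg (hE_nonneg _), Real.norm_of_nonneg (hE_nonneg _)]
    change d (n + 2) + d (n + 1) / 2 ≤ (θ + 1 / 2) * (d (n + 1) + d n / 2)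
    nlinarith [h n, mul_nonneg (sub_nonneg.2 hθ.le) (hd n)]
  have hE_summable : Summable E :=
    summable_of_ratio_norm_eventually_le (by linarith) (.of_forall hE_contract)
  exact (hE_summable.mul_left 2).of_nonneg_of_le hd fun n ↦ by simp only [hE]; linarith [hd (n + 1)]

theorem cauchySeq_of_dist_le_mul_add {α : Type*} [PseudoMetricSpace α] {x : ℕ → α} {θ : ℝ}
    (hθ : θ < 1 / 2) (h : ∀ n, dist (x (n + 2)) (x (n + 3)) ≤
      θ * (dist (x n) (x (n + 1)) + dist (x (n + 1)) (x (n + 2)))) :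
    CauchySeq x :=
  cauchySeq_of_summable_dist (summable_of_le_mul_add (fun _ ↦ dist_nonneg) hθ h)

theorem sum_Icc_one_eq_sum_range {M : Type*} [AddCommMonoid M] (f : ℕ → M) (n : ℕ) :
    ∑ i ∈ Icc 1 n, f i = ∑ i ∈ range n, f (i + 1) := by
  rw [← Ico_add_one_right_eq_Icc, sum_Ico_eq_sum_range]
  simp [add_comm]

theorem sum_Icc_add_sum_reflect {R : Type*} [CommSemiring R] (f : ℕ → R) (n : ℕ) :
    ∑ i ∈ Icc 1 (n + 1), (f (i - 1) + f (n + 1 - i)) = 2 * ∑ i ∈ range (n + 1), f i := by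
  have hreflect := sum_range_reflect f (n + 1)
  rw [Nat.add_sub_cancel] at hreflect
  simp only [sum_Icc_one_eq_sum_range, Nat.add_sub_cancel, Nat.add_sub_add_right,
    sum_add_distrib, hreflect]
  ring

lemma p_add_two (n : ℕ) : p (n + 2) = 1 / ((n : ℝ) + 2) + (n : ℝ) / ((n : ℝ) + 2) * q n := by
  rw [p, q, pq.eq_3]

lemma q_succ_eq_sum (n : ℕ) :
    q (n + 1) = (∑ i ∈ Icc 1 (n + 1), (((i - 1 : ℕ) : ℝ) * p (i - 1) +
      ((n + 1 - i : ℕ) : ℝ) * p (n + 1 - i) + 1)) / ((n : ℝ) + 1) ^ 2 := by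
  cases n with
  | zero =>
    rw [q, pq.eq_2, sum_attach _ (fun i ↦ (((i - 1 : ℕ) : ℝ) * (pq (i - 1)).1 +
      ((1 - i : ℕ) : ℝ) * (pq (1 - i)).1 + 1) / ((1 : ℕ) : ℝ))]
    simp [p]
  | succ n =>
    rw [q, pq.eq_3, sum_attach _ (fun i ↦ (((i - 1 : ℕ) : ℝ) * (pq (i - 1)).1 +
      ((n + 2 - i : ℕ) : ℝ) * (pq (n + 2 - i)).1 + 1) / ((n : ℝ) + 2)), ← sum_div]
    simp only [p, show n + 1 + 1 = n + 2 from rfl]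
    push_cast
    field_simp
    ring

lemma s_eq_sum_range (n : ℕ) : s n = ∑ i ∈ range (n + 1), (i : ℝ) * p i := by
  rw [s, sum_Icc_one_eq_sum_range, sum_range_succ']
  simp

lemma q_succ (n : ℕ) : q (n + 1) = (2 * s n + (n + 1)) / ((n : ℝ) + 1) ^ 2 := by
  rw [q_succ_eq_sum, sum_add_distrib, sum_Icc_add_sum_reflect (fun i ↦ (i : ℝ) * p i),
    ← s_eq_sum_range]
  simp

lemma s_succ (n : ℕ) : s (n + 1) = s n + ((n : ℝ) + 1) * p (n + 1) := by
  rw [s, s, sum_Icc_succ_top (by omega)]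
  push_cast
  ring

lemma s_add_three (n : ℕ) :
    s (n + 3) = s (n + 2) + 1 + (2 * s n + ((n : ℝ) + 1)) / ((n : ℝ) + 1) := by
  have hp : ((n : ℝ) + 3) * p (n + 3) = 1 + (2 * s n + ((n : ℝ) + 1)) / ((n : ℝ) + 1) := by
    rw [show n + 3 = n + 1 + 2 from rfl, p_add_two, q_succ]
    push_cast
    field_simp
    ring
  have hs := s_succ (n + 2)
  push_cast at hs
  linear_combination hs + hp

lemma a_add_three_sub (n : ℕ) : a (n + 3) - a (n + 2) =
    2 * ((n : ℝ) + 6) / (((n : ℝ) + 4) * ((n : ℝ) + 9)) * (a n - a (n + 2)) := by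
  simp only [a, s_add_three]
  push_cast
  field_simp
  ring

lemma dist_a_add_two_le (n : ℕ) :
    dist (a (n + 2)) (a (n + 3)) ≤
      1 / 3 * (dist (a n) (a (n + 1)) + dist (a (n + 1)) (a (n + 2))) := by
  have hcoef : 2 * ((n : ℝ) + 6) / (((n : ℝ) + 4) * ((n : ℝ) + 9)) ≤ 1 / 3 := by
    rw [div_le_div_iff₀ (by positivity) (by norm_num)]
    nlinarith [sq_nonneg (n : ℝ)]
  calc dist (a (n + 2)) (a (n + 3))
      = 2 * ((n : ℝ) + 6) / (((n : ℝ) + 4) * ((n : ℝ) + 9)) * dist (a n) (a (n + 2)) := by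
        rw [dist_comm, Real.dist_eq, a_add_three_sub, abs_mul, abs_of_nonneg (by positivity),
          ← Real.dist_eq]
    _ ≤ 1 / 3 * dist (a n) (a (n + 2)) := by gcongr
    _ ≤ 1 / 3 * (dist (a n) (a (n + 1)) + dist (a (n + 1)) (a (n + 2))) := by
        gcongr; exact dist_triangle _ _ _

/-- Proposition 3.3 (convergence): the sequence `a` converges. -/
theorem a_converges : ∃ L : ℝ, Filter.Tendsto a Filter.atTop (nhds L) :=
  cauchySeq_tendsto_of_complete (cauchySeq_of_dist_le_mul_add (by norm_num) dist_a_add_two_le)
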